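/- arXiv:1810.06220 — 3 statements merged into one kernel-verified Lean document; each statement's English description precedes it below -/
import Mathlib

section
/- For all integers k ≥ 1, the sum over l from 1 to k of S(k,l)·(-1)^l·(l+1)! equals (-2)^k, where S(k,l) denotes the Stirling number of the second kind. -/
/-!
Write `t n k = S(n,k) (-1)^k (k+1)!`. The recurrence `S(n+1,k+1) = (k+1) S(n,k+1) + S(n,k)` and
`(k+2)! = (2 + k) (k+1)!` give `t (n+1) (k+1) = -2 t n k + ((k+1) t n (k+1) - k t n k)`; summed
over `k` the differences telescope, so each row sum is `-2` times the previous one. The term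
`l = 0` vanishes once `k ≥ 1`.
-/

/-- Stirling numbers of the second kind. -/
def stirling : ℕ → ℕ → ℕ
  | 0, 0 => 1
  | 0, _ + 1 => 0
  | _ + 1, 0 => 0
  | k + 1, l + 1 => stirling k l + (l + 1) * stirling k (l + 1)

open Finset Nat

theorem stirling_eq_stirlingSecond : ∀ k l, stirling k l = stirlingSecond k l
  | 0, 0 | 0, _ + 1 | _ + 1, 0 => rfl
  | k + 1, l + 1 => by
    rw [stirling, stirlingSecond_succ_succ, stirling_eq_stirlingSecond k l,
      stirling_eq_stirlingSecond k (l + 1), add_comm]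

theorem sum_range_stirlingSecond_mul_neg_one_pow_mul_factorial_succ {R : Type*} [CommRing R]
    (n : ℕ) :
    ∑ k ∈ range (n + 1), (stirlingSecond n k : R) * (-1) ^ k * (k + 1)! = (-2) ^ n := by
  induction n with
  | zero => simp
  | succ n ih =>
    set t : ℕ → R := fun k ↦ (stirlingSecond n k : R) * (-1) ^ k * (k + 1)! with ht
    have term_succ (k : ℕ) :
        (stirlingSecond (n + 1) (k + 1) : R) * (-1) ^ (k + 1) * (k + 1 + 1)! =
          -2 * t k + ((k + 1 : ℕ) * t (k + 1) - k * t k) := by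
      simp only [ht, stirlingSecond_succ_succ, factorial_succ (k + 1)]
      push_cast
      ring
    rw [sum_range_succ', sum_congr rfl fun k _ ↦ term_succ k, sum_add_distrib, ← mul_sum, ih,
      sum_range_sub fun k ↦ (k : R) * t k]
    simp only [ht, stirlingSecond_eq_zero_of_lt (lt_add_one n), stirlingSecond_succ_zero]
    push_cast
    ring

/-- For all integers `k ≥ 1`, `∑_{l=1}^{k} S(k,l)·(-1)^l·(l+1)! = (-2)^k`. -/
theorem stirling_alternating_factorial_sum (k : ℕ) (hk : 1 ≤ k) :
    ∑ l ∈ Finset.Icc 1 k, (stirling k l : ℤ) * (-1) ^ l * (Nat.factorial (l + 1) : ℤ)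
      = (-2) ^ k := by
  obtain ⟨n, rfl⟩ := Nat.exists_eq_add_of_le' hk
  rw [← sum_range_stirlingSecond_mul_neg_one_pow_mul_factorial_succ, range_succ_eq_Icc_zero,
    ← insert_Icc_add_one_left_eq_Icc (zero_le _), sum_insert (by simp)]
  simp [stirling_eq_stirlingSecond]
end

section
/- For a connected finite graph G with a chosen root vertex v₀, the Kirchhoff polynomial satisfies Ψ_G(α) = (∏_{e∈E} α_e) · det(I'ᵀ A⁻¹ I'), where I' is the reduced incidence matrix (incidence matrix with the column of v₀ deleted) and A is the diagonal matrix with entries α_e, with all α_e nonzero elements of a field. -/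
/-- A finite multigraph with an orientation on each edge: every edge `e` has a
source `src e` and a target `tgt e`. -/
structure DirGraph (V E : Type*) where
  src : E → V
  tgt : E → V

namespace DirGraph

variable {V E : Type*}

/-- `u` and `v` are joined by some edge of `S`. -/
def Adj (G : DirGraph V E) (S : Set E) (u v : V) : Prop :=
  ∃ e ∈ S, (G.src e = u ∧ G.tgt e = v) ∨ (G.src e = v ∧ G.tgt e = u)

/-- `T` is a spanning tree of `G`: the subgraph `(V, T)` is connected and
`|T| = |V| - 1`. -/
def IsSpanningTree [Fintype V] (G : DirGraph V E) (T : Finset E) : Prop :=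
  (∀ u v : V, Relation.EqvGen (G.Adj ↑T) u v) ∧ T.card + 1 = Fintype.card V

open Classical in
/-- The Kirchhoff polynomial `Ψ_G(α) = ∑_{T spanning tree} ∏_{e ∉ T} α_e`. -/
noncomputable def kirchhoff [Fintype V] [Fintype E] [DecidableEq E]
    {R : Type*} [CommRing R] (G : DirGraph V E) (α : E → R) : R :=
  ∑ T : Finset E, if G.IsSpanningTree T then ∏ e ∈ Tᶜ, α e else 0

/-- The incidence matrix of `G`: entry `(e, v)` is `+1` if `v` is the target of `e`,
`-1` if `v` is its source (and their difference in general, so `0` otherwise). -/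
def inc [DecidableEq V] (G : DirGraph V E) (F : Type*) [Field F] : Matrix E V F :=
  fun e v => (if G.tgt e = v then 1 else 0) - (if G.src e = v then 1 else 0)

/-- The reduced incidence matrix: the incidence matrix with the column of the chosen
root vertex `v₀` deleted. -/
def redInc [DecidableEq V] (G : DirGraph V E) (F : Type*) [Field F] (v₀ : V) :
    Matrix E {v : V // v ≠ v₀} F :=
  fun e v => G.inc F e v.val

end DirGraph

/-!
By Cauchy–Binet, `det (I'ᵀ A⁻¹ I')` is the sum, over sets `T` of `|V| - 1` edges, of
`(∏_{e ∈ T} α_e⁻¹) · det (I'_T)²`, where `I'_T` is the square block of rows in `T`.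
The incidence matrix is totally unimodular, so `det I'_T ∈ {0, ±1}`; and `I'_T` is singular
exactly when `T` does not connect `V`, because a kernel vector of `I'_T`, extended by `0` at `v₀`,
is a potential constant along the edges of `T`. Multiplying by `∏_e α_e` turns the term of a
spanning tree `T` into `∏_{e ∉ T} α_e`.
-/

theorem Finset.image_coe_equiv {m n : Type*} [Fintype m] [DecidableEq n] {T : Finset n}
    (σ : m ≃ T) : univ.image (fun i => (σ i : n)) = T := by
  ext x
  simp only [mem_image, mem_univ, true_and]
  exact ⟨fun ⟨i, hi⟩ => hi ▸ (σ i).2, fun hx => ⟨σ.symm ⟨x, hx⟩, by simp⟩⟩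

namespace Matrix

open Finset Equiv

variable {m n R : Type*} [Fintype m] [DecidableEq m] [CommRing R]

theorem det_mul_eq_sum_det_submatrix_mul_prod [Fintype n] (A : Matrix m n R)
    (B : Matrix n m R) :
    (A * B).det = ∑ p : m → n, (A.submatrix id p).det * ∏ i, B (p i) i := by
  simp only [det_apply', mul_apply, prod_univ_sum, mul_sum, Fintype.piFinset_univ]
  rw [sum_comm]
  refine sum_congr rfl fun p _ => ?_
  rw [sum_mul]
  refine sum_congr rfl fun σ _ => ?_
  simp only [submatrix_apply, id, prod_mul_distrib, mul_assoc]

/-- The Cauchy–Binet formula, with the maximal minors indexed by a set `T` of columns of `A`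
together with a bijection `m ≃ T`. -/
theorem det_mul_eq_sum_finset_sum_equiv [Fintype n] [DecidableEq n] (A : Matrix m n R)
    (B : Matrix n m R) :
    (A * B).det =
      ∑ T : Finset n, ∑ σ : m ≃ T, (A.submatrix id (σ ·)).det * ∏ i, B (σ i) i := by
  rw [det_mul_eq_sum_det_submatrix_mul_prod,
    ← Fintype.sum_fiberwise (fun p : m → n => univ.image p)]
  refine sum_congr rfl fun T _ => ?_
  symm
  refine Fintype.sum_of_injective (fun σ : m ≃ T => ⟨(σ ·), image_coe_equiv σ⟩) ?_ _ _ ?_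
    fun σ => rfl
  · intro σ τ h
    ext i
    exact congrFun (congrArg Subtype.val h) i
  · rintro ⟨p, hp⟩ hrange
    have hp_not_injective : ¬ Function.Injective p := by
      intro hinj
      refine hrange
        ⟨Equiv.ofBijective (fun i => ⟨p i, hp ▸ mem_image_of_mem p (mem_univ i)⟩)
        ⟨fun i j h => hinj (congrArg Subtype.val h), ?_⟩, rfl⟩
      rintro ⟨x, hx⟩
      obtain ⟨i, -, rfl⟩ := mem_image.mp (hp ▸ hx)
      exact ⟨i, rfl⟩
    obtain ⟨i, j, hij, hne⟩ := Function.not_injective_iff.mp hp_not_injective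
    rw [det_zero_of_column_eq hne (fun k => by simp [hij]), zero_mul]

theorem sum_equiv_det_submatrix_mul_prod {T : Type*} [Fintype T] [DecidableEq T]
    (A : Matrix m T R) (B : Matrix T m R) (e : m ≃ T) :
    ∑ σ : m ≃ T, (A.submatrix id σ).det * ∏ i, B (σ i) i =
      (A.submatrix id e).det * (B.submatrix e id).det := by
  rw [← (equivCongr (Equiv.refl m) e).sum_comp, det_apply' (B.submatrix e id), mul_sum]
  refine sum_congr rfl fun τ _ => ?_
  have hA : A.submatrix id (equivCongr (Equiv.refl m) e τ) = (A.submatrix id e).submatrix id τ :=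
    rfl
  rw [hA, det_permute']
  simp only [equivCongr_apply_apply, Equiv.refl_symm, Equiv.coe_refl, submatrix_apply, id]
  ring

theorem det_transpose_mul_diagonal_submatrix [Fintype n] [DecidableEq n] (B : Matrix n m R)
    (d : n → R) (f : m → n) :
    ((Bᵀ * diagonal d).submatrix id f).det = (B.submatrix f id).det * ∏ i, d (f i) := by
  have h : (Bᵀ * diagonal d).submatrix id f = (B.submatrix f id)ᵀ * diagonal (d ∘ f) := by
    ext i j
    simp [mul_diagonal]
  rw [h, det_mul, det_transpose, det_diagonal]
  rfl

theorem sum_equiv_det_transpose_mul_diagonal_submatrix_mul_prod [Fintype n] [DecidableEq n]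
    {T : Finset n} (B : Matrix n m R) (d : n → R) (e : m ≃ T) :
    ∑ σ : m ≃ T, ((Bᵀ * diagonal d).submatrix id (σ ·)).det * ∏ i, B (σ i) i =
      (∏ t ∈ T, d t) * (B.submatrix (e ·) id).det ^ 2 := by
  refine (sum_equiv_det_submatrix_mul_prod ((Bᵀ * diagonal d).submatrix id Subtype.val)
    (B.submatrix Subtype.val id) e).trans ?_
  change ((Bᵀ * diagonal d).submatrix id (e ·)).det * (B.submatrix (e ·) id).det = _
  rw [det_transpose_mul_diagonal_submatrix, e.prod_comp (fun t : T => d t), prod_coe_sort T d]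
  ring

theorem det_mem_range_signType_cast_of_row_eq_single {k : ℕ}
    (M : Matrix (Fin (k + 1)) (Fin (k + 1)) R) (i j : Fin (k + 1)) (s : SignType)
    (hrow : M i = Pi.single j (s : R))
    (hminor : (M.submatrix i.succAbove j.succAbove).det ∈ Set.range SignType.cast) :
    M.det ∈ Set.range SignType.cast := by
  obtain ⟨t, ht⟩ := hminor
  rw [det_succ_row M i, Fintype.sum_eq_single j fun j' hj' => by simp [hrow, hj'], hrow,
    Pi.single_eq_same, ← ht]
  exact ⟨(-1) ^ (i + j : ℕ) * s * t, by simp⟩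

theorem IsTotallyUnimodular.det_mem_range_signType_cast {M : Matrix m m R}
    (hM : M.IsTotallyUnimodular) : M.det ∈ Set.range SignType.cast := by
  simpa using (isTotallyUnimodular_iff_fintype M).mp hM m id id

end Matrix

namespace DirGraph

open Finset Matrix

variable {V E : Type*} (G : DirGraph V E)

theorem eq_of_eqvGen_adj {X : Type*} (y : V → X) {S : Set E}
    (hy : ∀ e ∈ S, y (G.src e) = y (G.tgt e)) {u v : V} (h : Relation.EqvGen (G.Adj S) u v) :
    y u = y v := by
  have hequiv : Equivalence fun a b : V => y a = y b := ⟨fun _ => rfl, Eq.symm, Eq.trans⟩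
  refine hequiv.eqvGen_iff.mp (Relation.EqvGen.mono (fun a b hab => ?_) _ _ h)
  obtain ⟨e, he, ⟨rfl, rfl⟩ | ⟨rfl, rfl⟩⟩ := hab
  exacts [hy e he, (hy e he).symm]

variable (F : Type*) [Field F] [DecidableEq V]

theorem inc_apply (e : E) (v : V) :
    G.inc F e v = (if G.tgt e = v then 1 else 0) - (if G.src e = v then 1 else 0) := rfl

theorem inc_mulVec_apply [Fintype V] (y : V → F) (e : E) :
    (G.inc F *ᵥ y) e = y (G.tgt e) - y (G.src e) := by
  simp [mulVec, dotProduct, inc_apply, sub_mul, sum_sub_distrib]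

theorem exists_inc_comp_eq_single {ι : Type*} [DecidableEq ι] [Nonempty ι] {g : ι → V}
    (hg : g.Injective) {e : E} (he : G.tgt e ∈ Set.range g → G.src e ∉ Set.range g) :
    ∃ (j : ι) (s : SignType), (fun j => G.inc F e (g j)) = Pi.single j (s : F) := by
  by_cases ht : G.tgt e ∈ Set.range g
  · obtain ⟨j, hj⟩ := ht
    have hs : ∀ j', G.src e ≠ g j' := fun j' h => he ⟨j, hj⟩ ⟨j', h.symm⟩
    refine ⟨j, 1, funext fun j' => ?_⟩
    simp [inc_apply, ← hj, hg.eq_iff, Pi.single_apply, hs, eq_comm]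
  have ht : ∀ j', G.tgt e ≠ g j' := fun j' h => ht ⟨j', h.symm⟩
  by_cases hs : G.src e ∈ Set.range g
  · obtain ⟨j, hj⟩ := hs
    refine ⟨j, -1, funext fun j' => ?_⟩
    simp [inc_apply, ← hj, hg.eq_iff, Pi.single_apply, ht, eq_comm, apply_ite]
  have hs : ∀ j', G.src e ≠ g j' := fun j' h => hs ⟨j', h.symm⟩
  exact ⟨Classical.arbitrary ι, 0, funext fun j' => by simp [inc_apply, ht, hs]⟩

/-- If both endpoints of every selected edge lie among the selected vertices, the rows of the
square submatrix sum to zero; otherwise some row has at most one nonzero entry, and Laplace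
expansion along it reduces to a smaller submatrix. -/
theorem inc_isTotallyUnimodular : (G.inc F).IsTotallyUnimodular := by
  intro k
  induction k with
  | zero => exact fun _ _ _ _ => ⟨1, by simp⟩
  | succ k ih =>
    intro f g hf hg
    by_cases hboth : ∀ i, G.tgt (f i) ∈ Set.range g ∧ G.src (f i) ∈ Set.range g
    · refine ⟨0, ?_⟩
      rw [SignType.coe_zero, eq_comm, ← exists_mulVec_eq_zero_iff]
      refine ⟨1, one_ne_zero, funext fun i => ?_⟩
      obtain ⟨⟨a, ha⟩, ⟨b, hb⟩⟩ := hboth i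
      simp [mulVec, dotProduct, inc_apply, ← ha, ← hb, hg.eq_iff, sum_sub_distrib]
    obtain ⟨i, hi⟩ := not_forall.mp hboth
    obtain ⟨j, s, hrow⟩ := G.exists_inc_comp_eq_single F hg (not_and.mp hi)
    refine det_mem_range_signType_cast_of_row_eq_single _ i j s hrow ?_
    exact ih _ _ (hf.comp Fin.succAbove_right_injective) (hg.comp Fin.succAbove_right_injective)

theorem redInc_isTotallyUnimodular (v₀ : V) : (G.redInc F v₀).IsTotallyUnimodular :=
  (inc_isTotallyUnimodular G F).submatrix id Subtype.val

variable [Fintype V] (v₀ : V)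

theorem redInc_mulVec_comp_val (y : V → F) (hy : y v₀ = 0) (e : E) :
    (G.redInc F v₀ *ᵥ (y ∘ Subtype.val)) e = y (G.tgt e) - y (G.src e) := by
  rw [← inc_mulVec_apply, mulVec, dotProduct, mulVec, dotProduct,
    Fintype.sum_eq_add_sum_subtype_ne _ v₀, hy, mul_zero, zero_add]
  rfl

variable {G F v₀}

theorem det_redInc_submatrix_ne_zero {T : Finset E} (σ : {v // v ≠ v₀} ≃ T)
    (hT : ∀ u v, Relation.EqvGen (G.Adj T) u v) :
    ((G.redInc F v₀).submatrix (σ ·) id).det ≠ 0 := by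
  intro hdet
  obtain ⟨x, hx0, hx⟩ := exists_mulVec_eq_zero_iff.mpr hdet
  set y : V → F := fun v => if h : v = v₀ then 0 else x ⟨v, h⟩
  have hyx : y ∘ Subtype.val = x := funext fun w => dif_neg w.2
  have hedge : ∀ e ∈ T, y (G.src e) = y (G.tgt e) := by
    intro e he
    have hrow := congrFun hx (σ.symm ⟨e, he⟩)
    rw [← hyx] at hrow
    change (G.redInc F v₀ *ᵥ (y ∘ Subtype.val)) (σ (σ.symm ⟨e, he⟩) : E) = 0 at hrow
    rw [Equiv.apply_symm_apply, redInc_mulVec_comp_val G F v₀ y (dif_pos rfl),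
      sub_eq_zero] at hrow
    exact hrow.symm
  apply hx0
  funext w
  rw [← hyx]
  change y w = 0
  rw [eq_of_eqvGen_adj G y hedge (hT w v₀)]
  exact dif_pos rfl

theorem det_redInc_submatrix_eq_zero {T : Finset E} (σ : {v // v ≠ v₀} ≃ T)
    (hT : ¬ ∀ u v, Relation.EqvGen (G.Adj T) u v) :
    ((G.redInc F v₀).submatrix (σ ·) id).det = 0 := by
  classical
  obtain ⟨c, hc⟩ : ∃ c, ¬ Relation.EqvGen (G.Adj T) v₀ c := by
    by_contra! h
    exact hT fun u v => ((h u).symm _ _).trans _ _ _ (h v)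
  have hcv₀ : c ≠ v₀ := by
    rintro rfl
    exact hc (.refl _)
  set y : V → F := fun v => if Relation.EqvGen (G.Adj T) v c then 1 else 0
  rw [← exists_mulVec_eq_zero_iff]
  refine ⟨y ∘ Subtype.val, fun h => ?_, funext fun w => ?_⟩
  · have hxc := congrFun h ⟨c, hcv₀⟩
    simp [y, Relation.EqvGen.refl] at hxc
  · have hedge : Relation.EqvGen (G.Adj T) (G.src (σ w)) (G.tgt (σ w)) :=
      .rel _ _ ⟨σ w, (σ w).2, .inl ⟨rfl, rfl⟩⟩
    have hiff : Relation.EqvGen (G.Adj T) (G.src (σ w)) c ↔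
        Relation.EqvGen (G.Adj T) (G.tgt (σ w)) c :=
      ⟨hedge.symm.trans _ _ _, hedge.trans _ _ _⟩
    change (G.redInc F v₀ *ᵥ (y ∘ Subtype.val)) (σ w) = 0
    rw [redInc_mulVec_comp_val G F v₀ y (if_neg hc), sub_eq_zero]
    simp only [y, hiff]

theorem sq_det_redInc_submatrix_eq_one {T : Finset E} (σ : {v // v ≠ v₀} ≃ T)
    (hT : ∀ u v, Relation.EqvGen (G.Adj T) u v) :
    ((G.redInc F v₀).submatrix (σ ·) id).det ^ 2 = 1 := by
  have hTU := (redInc_isTotallyUnimodular G F v₀).submatrix (fun w => (σ w : E)) id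
  obtain ⟨s, hs⟩ := hTU.det_mem_range_signType_cast
  have hne := det_redInc_submatrix_ne_zero (F := F) σ hT
  rw [← hs] at hne ⊢
  cases s <;> simp at hne ⊢

open Classical in
theorem sum_equiv_redInc_eq_ite_isSpanningTree [Fintype E] [DecidableEq E] (d : E → F)
    (T : Finset E) :
    ∑ σ : {v // v ≠ v₀} ≃ T,
        (((G.redInc F v₀)ᵀ * diagonal d).submatrix id (σ ·)).det *
          ∏ i, G.redInc F v₀ (σ i) i =
      if G.IsSpanningTree T then ∏ e ∈ T, d e else 0 := by
  have hcardV : Fintype.card {v // v ≠ v₀} + 1 = Fintype.card V :=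
    Fintype.card_option.symm.trans (Fintype.card_congr (Equiv.optionSubtypeNe v₀))
  by_cases hcard : Fintype.card {v // v ≠ v₀} = T.card
  · obtain e : {v // v ≠ v₀} ≃ T := Fintype.equivOfCardEq (by simpa using hcard)
    rw [sum_equiv_det_transpose_mul_diagonal_submatrix_mul_prod _ d e]
    by_cases hT : ∀ u v, Relation.EqvGen (G.Adj T) u v
    · rw [if_pos ⟨hT, by omega⟩, sq_det_redInc_submatrix_eq_one e hT, mul_one]
    · rw [if_neg fun h => hT h.1, det_redInc_submatrix_eq_zero e hT]
      ring
  · have : IsEmpty ({v // v ≠ v₀} ≃ T) := by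
      rw [← not_nonempty_iff, ← Fintype.card_eq]
      simpa using hcard
    rw [Fintype.sum_empty, if_neg fun h => hcard (by have := h.2; omega)]

end DirGraph

open DirGraph in
theorem kirchhoff_eq_det_weighted_laplacian_general
    {V E F : Type*} [Fintype V] [Fintype E] [DecidableEq V] [DecidableEq E] [Field F]
    (G : DirGraph V E) (v₀ : V) (α : E → F)
    (hα : ∀ e, α e ≠ 0) :
    G.kirchhoff α =
      (∏ e, α e) *
        Matrix.det ((G.redInc F v₀).transpose * Matrix.diagonal (fun e => (α e)⁻¹) *
          G.redInc F v₀) := by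
  rw [Matrix.det_mul_eq_sum_finset_sum_equiv, Finset.mul_sum, kirchhoff]
  refine Finset.sum_congr rfl fun T _ => ?_
  rw [sum_equiv_redInc_eq_ite_isSpanningTree, mul_ite, mul_zero,
    ← Finset.prod_mul_prod_compl T α, Finset.prod_inv_distrib, mul_right_comm,
    mul_inv_cancel₀ (Finset.prod_ne_zero_iff.mpr fun e _ => hα e), one_mul]

open DirGraph in
/-- Matrix-Tree theorem: for a connected finite graph `G` with root `v₀` and nonzero
edge variables `α_e` in a field, the Kirchhoff polynomial equals
`(∏_e α_e) · det(I'ᵀ A⁻¹ I')` with `I'` the reduced incidence matrix and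
`A = diag(α_e)`. -/
theorem kirchhoff_eq_det_weighted_laplacian
    {V E F : Type*} [Fintype V] [Fintype E] [DecidableEq V] [DecidableEq E] [Field F]
    (G : DirGraph V E) (v₀ : V) (α : E → F)
    (hconn : ∀ u v : V, Relation.EqvGen (G.Adj Set.univ) u v)
    (hα : ∀ e, α e ≠ 0) :
    G.kirchhoff α =
      (∏ e, α e) *
        Matrix.det ((G.redInc F v₀).transpose * Matrix.diagonal (fun e => (α e)⁻¹) *
          G.redInc F v₀) :=
  kirchhoff_eq_det_weighted_laplacian_general G v₀ α hα
end

section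
/- For a finite connected graph G and an edge e that is not a bridge, the diagonal cycle polynomial satisfies χ_G^{e,e} = Σ_{C simple cycle containing e} Ψ_{G/C} = Ψ_{G∖e} = ∂Ψ_G/∂α_e. -/
namespace DirGraph

variable {V E : Type*}

/-- The number of connected components of the subgraph of `G` with all vertices and
edge set `S`. -/
noncomputable def numComponents (G : DirGraph V E) (S : Set E) : ℕ :=
  Nat.card (Quotient (Relation.EqvGen.setoid (G.Adj S)))

/-- The degree of a vertex in the edge set `S` (loops counted twice). -/
def degOn [DecidableEq V] [Fintype E] (G : DirGraph V E) (S : Finset E) (v : V) : ℕ :=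
  ∑ e ∈ S, ((if G.src e = v then 1 else 0) + (if G.tgt e = v then 1 else 0))

/-- `C` is (the edge set of) a simple cycle: nonempty, 2-regular on the vertices it
meets, and connected. -/
def IsSimpleCycle [DecidableEq V] [Fintype E] (G : DirGraph V E) (C : Finset E) : Prop :=
  C.Nonempty ∧ (∀ v : V, G.degOn C v = 0 ∨ G.degOn C v = 2) ∧
    ∀ e ∈ C, ∀ f ∈ C, Relation.EqvGen (G.Adj ↑C) (G.src e) (G.src f)

/-- `B` is a bond: removing `B` leaves exactly two connected components, and `B` is
minimal with this property. -/
def IsBond [Fintype E] [DecidableEq E] (G : DirGraph V E) (B : Finset E) : Prop :=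
  G.numComponents ↑(Bᶜ) = 2 ∧ ∀ B' : Finset E, B' ⊂ B → G.numComponents ↑(B'ᶜ) ≠ 2

open Classical in
/-- The Kirchhoff polynomial of the subgraph `(V, S)`, extended multiplicatively over
connected components: the sum over maximal spanning forests `F` of `S` of
`∏_{e ∈ S ∖ F} α_e`. -/
noncomputable def kirchhoffOn [Fintype V] [Fintype E] [DecidableEq E]
    {R : Type*} [CommRing R] (G : DirGraph V E) (S : Finset E) (α : E → R) : R :=
  ∑ F : Finset E,
    if F ⊆ S ∧ (∀ u v : V, Relation.EqvGen (G.Adj ↑F) u v ↔ Relation.EqvGen (G.Adj ↑S) u v)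
        ∧ F.card + G.numComponents ↑S = Fintype.card V then
      ∏ e ∈ S \ F, α e
    else 0

open Classical in
/-- The Kirchhoff polynomial of the contraction `G/A` of the edge set `A`: the sum over
edge sets `F ⊆ E∖A` that together with `A` span `G` and become spanning trees of `G/A`,
of `∏_{e ∈ (E∖A)∖F} α_e`. -/
noncomputable def kirchhoffContract [Fintype V] [Fintype E] [DecidableEq E]
    {R : Type*} [CommRing R] (G : DirGraph V E) (A : Finset E) (α : E → R) : R :=
  ∑ F : Finset E,
    if F ⊆ Aᶜ ∧ (∀ u v : V, Relation.EqvGen (G.Adj ↑(F ∪ A)) u v)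
        ∧ F.card + 1 = G.numComponents ↑A then
      ∏ e ∈ Aᶜ \ F, α e
    else 0


/-- `e` is a bridge: deleting `e` disconnects `G`. -/
def IsBridge (G : DirGraph V E) (e : E) : Prop :=
  ¬ ∀ u v : V, Relation.EqvGen (G.Adj {f | f ≠ e}) u v

end DirGraph

namespace MvPolynomial

lemma pderiv_prod_X {σ R : Type*} [CommSemiring R] [DecidableEq σ] (i : σ) (s : Finset σ) :
    pderiv i (∏ j ∈ s, X j : MvPolynomial σ R)
      = if i ∈ s then ∏ j ∈ s.erase i, X j else 0 := by
  have hzero (t : Finset σ) (hi : i ∉ t) : pderiv i (∏ j ∈ t, X j : MvPolynomial σ R) = 0 :=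
    Finset.prod_induction _ (fun p => pderiv i p = 0)
      (fun p q hp hq => by simp [hp, hq]) pderiv_one
      fun j hj => pderiv_X_of_ne (ne_of_mem_of_not_mem hj hi)
  split_ifs with hi
  · rw [← Finset.mul_prod_erase s _ hi, pderiv_mul, pderiv_X_self, hzero _ (s.notMem_erase i),
      one_mul, mul_zero, add_zero]
  · exact hzero s hi

end MvPolynomial

namespace DirGraph

open Relation Finset

variable {V E : Type*}

section Connectivity

variable {G : DirGraph V E}

lemma eqvGen_mono {S S' : Set E} (h : S ⊆ S') {u v : V} (huv : EqvGen (G.Adj S) u v) :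
    EqvGen (G.Adj S') u v :=
  EqvGen.mono (fun _ _ ⟨f, hf, hj⟩ => ⟨f, h hf, hj⟩) _ _ huv

lemma eqvGen_of_eqvGen_insert {S : Set E} {f : E} (hf : EqvGen (G.Adj S) (G.src f) (G.tgt f))
    {u v : V} (h : EqvGen (G.Adj (insert f S)) u v) : EqvGen (G.Adj S) u v := by
  induction h with
  | rel a b hab =>
    obtain ⟨g, hg, hj⟩ := hab
    rcases Set.mem_insert_iff.mp hg with rfl | hg
    · rcases hj with ⟨rfl, rfl⟩ | ⟨rfl, rfl⟩
      exacts [hf, hf.symm]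
    · exact EqvGen.rel _ _ ⟨g, hg, hj⟩
  | refl a => exact EqvGen.refl a
  | symm a b _ ih => exact ih.symm
  | trans a b c _ _ ih₁ ih₂ => exact ih₁.trans _ _ _ ih₂

lemma numComponents_eq_one [Finite V] [Nonempty V] {S : Set E}
    (h : ∀ u v, EqvGen (G.Adj S) u v) : G.numComponents S = 1 := by
  rw [numComponents, Nat.card_eq_one_iff_unique]
  exact ⟨⟨fun a b => Quotient.inductionOn₂ a b fun u v => Quotient.sound (h u v)⟩,
    ⟨Quotient.mk _ (Classical.arbitrary V)⟩⟩

lemma reachable_fromRel_of_eqvGen {S : Set E} {u v : V} (h : EqvGen (G.Adj S) u v) :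
    (SimpleGraph.fromRel (G.Adj S)).Reachable u v := by
  induction h with
  | rel a b hab =>
    by_cases hab' : a = b
    · exact hab' ▸ SimpleGraph.Reachable.refl a
    · exact SimpleGraph.Adj.reachable ⟨hab', Or.inl hab⟩
  | refl a => exact SimpleGraph.Reachable.refl a
  | symm a b _ ih => exact ih.symm
  | trans a b c _ _ ih₁ ih₂ => exact ih₁.trans ih₂

lemma card_le_card_add_one_of_connected [Fintype V] {S : Finset E}
    (h : ∀ u v, EqvGen (G.Adj ↑S) u v) : Fintype.card V ≤ S.card + 1 := by
  rcases isEmpty_or_nonempty V with _ | _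
  · simp
  let H := SimpleGraph.fromRel (G.Adj ↑S)
  have hH : H.Connected :=
    { preconnected := fun u v => reachable_fromRel_of_eqvGen (h u v) }
  have hedges : H.edgeSet ⊆ (fun f => s(G.src f, G.tgt f)) '' ↑S := by
    intro x
    induction x using Sym2.ind with
    | _ u v =>
      rintro ⟨-, hadj | hadj⟩ <;> obtain ⟨f, hf, ⟨rfl, rfl⟩ | ⟨rfl, rfl⟩⟩ := hadj <;>
        exact ⟨f, hf, by simp⟩
  calc Fintype.card V = Nat.card V := Nat.card_eq_fintype_card.symm
    _ ≤ Nat.card H.edgeSet + 1 := hH.card_vert_le_card_edgeSet_add_one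
    _ ≤ S.card + 1 := by
      rw [Nat.card_coe_set_eq, ← Set.ncard_coe_finset S]
      exact Nat.add_le_add_right ((Set.ncard_le_ncard hedges).trans Set.ncard_image_le) 1

end Connectivity

section Degree

variable [DecidableEq V] [Fintype E] {G : DirGraph V E}

lemma degOn_ne_zero_of_mem {S : Finset E} {f : E} (hf : f ∈ S) :
    G.degOn S (G.src f) ≠ 0 ∧ G.degOn S (G.tgt f) ≠ 0 := by
  constructor <;> intro h <;> simpa using sum_eq_zero_iff.mp h f hf

lemma exists_mem_of_degOn_ne_zero {S : Finset E} {v : V} (h : G.degOn S v ≠ 0) :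
    ∃ f ∈ S, G.src f = v ∨ G.tgt f = v := by
  obtain ⟨f, hf, hne⟩ := exists_ne_zero_of_sum_ne_zero h
  refine ⟨f, hf, ?_⟩
  by_contra! hc
  simp [hc.1, hc.2] at hne

lemma sum_degOn (S : Finset E) (K : Finset V) :
    ∑ v ∈ K, G.degOn S v
      = ∑ f ∈ S, ((if G.src f ∈ K then 1 else 0) + (if G.tgt f ∈ K then 1 else 0)) := by
  simp only [degOn]
  rw [sum_comm]
  refine sum_congr rfl fun f _ => ?_
  rw [sum_add_distrib, sum_ite_eq, sum_ite_eq]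

lemma sum_degOn_univ [Fintype V] (S : Finset E) : ∑ v, G.degOn S v = 2 * S.card := by
  simp [sum_degOn, mul_comm]

lemma even_sum_degOn {S : Finset E} {K : Finset V}
    (hK : ∀ f ∈ S, (G.src f ∈ K ↔ G.tgt f ∈ K)) : Even (∑ v ∈ K, G.degOn S v) := by
  rw [sum_degOn]
  refine even_sum _ fun f hf => ?_
  by_cases h : G.src f ∈ K
  · simp [h, (hK f hf).mp h]
  · simp [h, mt (hK f hf).mpr h]

/-- Parity: the component of `src e` in `C ∖ e` has an odd degree sum unless it contains
`tgt e`. -/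
lemma eqvGen_erase_of_even_degOn [Fintype V] [DecidableEq E] {C : Finset E}
    (hC : ∀ v, Even (G.degOn C v)) {e : E} (he : e ∈ C) :
    EqvGen (G.Adj ↑(C.erase e)) (G.src e) (G.tgt e) := by
  classical
  set K : Finset V := {v | EqvGen (G.Adj ↑(C.erase e)) (G.src e) v}
  have hsrc : G.src e ∈ K := by simp [K, EqvGen.refl]
  have hclosed : ∀ f ∈ C.erase e, (G.src f ∈ K ↔ G.tgt f ∈ K) := by
    intro f hf
    have hadj : EqvGen (G.Adj ↑(C.erase e)) (G.src f) (G.tgt f) :=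
      EqvGen.rel _ _ ⟨f, hf, Or.inl ⟨rfl, rfl⟩⟩
    simp only [K, mem_filter, mem_univ, true_and]
    exact ⟨fun h => h.trans _ _ _ hadj, fun h => h.trans _ _ _ hadj.symm⟩
  have hsplit : ∑ v ∈ K, G.degOn C v
      = (1 + if G.tgt e ∈ K then 1 else 0) + ∑ v ∈ K, G.degOn (C.erase e) v := by
    rw [sum_degOn, sum_degOn, ← add_sum_erase _ _ he, if_pos hsrc]
  have heven := even_sum _ fun v (_ : v ∈ K) => hC v
  rw [hsplit, Nat.even_add] at heven
  have htgt : G.tgt e ∈ K := by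
    by_contra h
    simp [h, even_sum_degOn hclosed] at heven
  simpa [K] using htgt

lemma IsSimpleCycle.even_degOn {C : Finset E} (hC : G.IsSimpleCycle C) (v : V) :
    Even (G.degOn C v) := by
  rcases hC.2.1 v with h | h <;> simp [h]

lemma card_filter_degOn_ne_zero [Fintype V] {C : Finset E}
    (hC : ∀ v, G.degOn C v = 0 ∨ G.degOn C v = 2) :
    #{v | G.degOn C v ≠ 0} = C.card := by
  have h : ∑ v, G.degOn C v = ∑ v with G.degOn C v ≠ 0, 2 := by
    rw [sum_filter]
    refine sum_congr rfl fun v _ => ?_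
    rcases hC v with h | h <;> simp [h]
  rw [sum_degOn_univ, sum_const, smul_eq_mul] at h
  omega

/-- The vertices of `C` form one class and every other vertex is a class of its own. -/
lemma numComponents_eq_card_filter_degOn_eq_zero_add_one [Fintype V] {C : Finset E}
    (hne : C.Nonempty) (hconn : ∀ e ∈ C, ∀ f ∈ C, EqvGen (G.Adj ↑C) (G.src e) (G.src f)) :
    G.numComponents ↑C = #{v | G.degOn C v = 0} + 1 := by
  let g : V → Option {v : V // G.degOn C v = 0} :=
    fun v => if h : G.degOn C v = 0 then some ⟨v, h⟩ else none
  have hsupp : ∀ v, G.degOn C v ≠ 0 → ∃ f ∈ C, EqvGen (G.Adj ↑C) v (G.src f) := by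
    intro v hv
    obtain ⟨f, hf, rfl | rfl⟩ := exists_mem_of_degOn_ne_zero hv
    · exact ⟨f, hf, EqvGen.refl _⟩
    · exact ⟨f, hf, (EqvGen.rel _ _ ⟨f, hf, Or.inl ⟨rfl, rfl⟩⟩).symm⟩
  have hker : EqvGen.setoid (G.Adj ↑C) = Setoid.ker g := by
    refine le_antisymm (Setoid.eqvGen_le fun u v huv => ?_) fun u v huv => ?_
    · obtain ⟨f, hf, ⟨rfl, rfl⟩ | ⟨rfl, rfl⟩⟩ := huv <;>
        simp [g, Setoid.ker_def, degOn_ne_zero_of_mem hf]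
    · rw [Setoid.ker_def] at huv
      by_cases hu : G.degOn C u = 0 <;> by_cases hv : G.degOn C v = 0
      · simp only [g, dif_pos hu, dif_pos hv, Option.some.injEq, Subtype.mk.injEq] at huv
        exact huv ▸ EqvGen.refl u
      · simp [g, hu, hv] at huv
      · simp [g, hu, hv] at huv
      · obtain ⟨f, hf, huf⟩ := hsupp u hu
        obtain ⟨f', hf', hvf'⟩ := hsupp v hv
        exact (huf.trans _ _ _ (hconn f hf f' hf')).trans _ _ _ hvf'.symm
  have hsurj : Function.Surjective g := by
    rintro (_ | ⟨v, hv⟩)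
    · obtain ⟨f, hf⟩ := hne
      exact ⟨G.src f, by simp [g, (degOn_ne_zero_of_mem hf).1]⟩
    · exact ⟨v, by simp [g, hv]⟩
  rw [numComponents, hker, Nat.card_congr (Setoid.quotientKerEquivOfSurjective g hsurj),
    Nat.card_eq_fintype_card, Fintype.card_option, Fintype.card_subtype]

lemma IsSimpleCycle.numComponents_add_card [Fintype V] {C : Finset E}
    (hC : G.IsSimpleCycle C) : G.numComponents ↑C + C.card = Fintype.card V + 1 := by
  rw [numComponents_eq_card_filter_degOn_eq_zero_add_one hC.1 hC.2.2,
    ← card_filter_degOn_ne_zero hC.2.1, ← card_univ,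
    ← card_filter_add_card_filter_not (s := univ) (fun v => G.degOn C v = 0)]
  ring

end Degree

section Walks

instance (G : DirGraph V E) (S : Set E) : Std.Symm (G.Adj S) :=
  ⟨fun _ _ ⟨f, hf, h⟩ => ⟨f, hf, h.symm⟩⟩

variable [DecidableEq V]

def nextV (G : DirGraph V E) (f : E) (u : V) : V :=
  if G.src f = u then G.tgt f else G.src f

def IsWalk (G : DirGraph V E) : V → List E → V → Prop
  | u, [], v => u = v
  | u, f :: l, v => (G.src f = u ∨ G.tgt f = u) ∧ G.IsWalk (G.nextV f u) l v

def walkVerts (G : DirGraph V E) : V → List E → List V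
  | u, [] => [u]
  | u, f :: l => u :: G.walkVerts (G.nextV f u) l

variable {G : DirGraph V E}

lemma nextV_eq_of_joins {f : E} {u v : V}
    (h : (G.src f = u ∧ G.tgt f = v) ∨ (G.src f = v ∧ G.tgt f = u)) : G.nextV f u = v := by
  unfold nextV
  rcases h with ⟨rfl, rfl⟩ | ⟨rfl, rfl⟩ <;> split_ifs <;> simp_all

lemma joins_nextV {f : E} {u : V} (h : G.src f = u ∨ G.tgt f = u) :
    (G.src f = u ∧ G.tgt f = G.nextV f u) ∨ (G.src f = G.nextV f u ∧ G.tgt f = u) := by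
  unfold nextV
  rcases h with h | h <;> split_ifs <;> simp_all

lemma mem_walkVerts_self (u : V) (l : List E) : u ∈ G.walkVerts u l := by
  cases l <;> simp [walkVerts]

lemma exists_isWalk_of_eqvGen {S : Set E} {u v : V} (h : EqvGen (G.Adj S) u v) :
    ∃ l : List E, (∀ f ∈ l, f ∈ S) ∧ G.IsWalk u l v := by
  rw [EqvGen.eqvGen_eq_reflTransGen] at h
  induction h using ReflTransGen.head_induction_on with
  | refl => exact ⟨[], by simp, rfl⟩
  | head hab _ ih =>
    obtain ⟨f, hf, hj⟩ := hab
    obtain ⟨l, hl, hw⟩ := ih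
    refine ⟨f :: l, by simpa [hf] using hl, ?_, nextV_eq_of_joins hj ▸ hw⟩
    rcases hj with ⟨h, -⟩ | ⟨-, h⟩
    exacts [Or.inl h, Or.inr h]

lemma IsWalk.eqvGen {S : Set E} :
    ∀ {l : List E} {u v : V}, G.IsWalk u l v → (∀ f ∈ l, f ∈ S) → EqvGen (G.Adj S) u v
  | [], _, _, rfl, _ => EqvGen.refl _
  | f :: _, _, _, hw, hS =>
    (EqvGen.rel _ _ ⟨f, hS f (by simp), joins_nextV hw.1⟩).trans _ _ _
      (hw.2.eqvGen fun g hg => hS g (by simp [hg]))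

lemma IsWalk.split :
    ∀ {l : List E} {u v x : V}, G.IsWalk u l v → x ∈ G.walkVerts u l →
      ∃ l₁ l₂, l = l₁ ++ l₂ ∧ G.IsWalk u l₁ x ∧ G.IsWalk x l₂ v
  | [], _, _, _, rfl, hx => by
    obtain rfl : _ = _ := by simpa [walkVerts] using hx
    exact ⟨[], [], rfl, rfl, rfl⟩
  | f :: l, _, _, _, hw, hx => by
    rcases List.mem_cons.mp hx with rfl | hx
    · exact ⟨[], f :: l, rfl, rfl, hw⟩
    · obtain ⟨l₁, l₂, rfl, h₁, h₂⟩ := hw.2.split hx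
      exact ⟨f :: l₁, l₂, rfl, ⟨hw.1, h₁⟩, h₂⟩

lemma IsWalk.endpoints_mem_walkVerts :
    ∀ {l : List E} {u v : V}, G.IsWalk u l v → ∀ f ∈ l,
      G.src f ∈ G.walkVerts u l ∧ G.tgt f ∈ G.walkVerts u l
  | [], _, _, _, _, hf => by simp at hf
  | g :: l, u, _, hw, f, hf => by
    simp only [walkVerts, List.mem_cons]
    rcases List.mem_cons.mp hf with rfl | hf
    · have h := mem_walkVerts_self (G := G) (G.nextV f u) l
      rcases joins_nextV hw.1 with ⟨h₁, h₂⟩ | ⟨h₁, h₂⟩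
      · exact ⟨Or.inl h₁, Or.inr (h₂ ▸ h)⟩
      · exact ⟨Or.inr (h₁ ▸ h), Or.inl h₂⟩
    · have h := hw.2.endpoints_mem_walkVerts f hf
      exact ⟨Or.inr h.1, Or.inr h.2⟩

lemma IsWalk.exists_shorter :
    ∀ {l : List E} {u v : V}, G.IsWalk u l v → ¬ (G.walkVerts u l).Nodup →
      ∃ m, m.Sublist l ∧ m.length < l.length ∧ G.IsWalk u m v
  | [], _, _, _, hnd => by simp [walkVerts] at hnd
  | f :: l, u, _, hw, hnd => by
    rw [walkVerts, List.nodup_cons, not_and_or, not_not] at hnd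
    rcases hnd with hu | hnd
    · obtain ⟨l₁, l₂, rfl, -, h⟩ := hw.2.split hu
      exact ⟨l₂, (List.sublist_append_right l₁ l₂).cons f, by simp, h⟩
    · obtain ⟨m, hm, hlen, h⟩ := hw.2.exists_shorter hnd
      exact ⟨f :: m, hm.cons_cons f, by simpa using hlen, ⟨hw.1, h⟩⟩

lemma IsWalk.exists_nodup {l : List E} {u v : V} (hw : G.IsWalk u l v) :
    ∃ m, m.Sublist l ∧ G.IsWalk u m v ∧ (G.walkVerts u m).Nodup := by
  induction h : l.length using Nat.strong_induction_on generalizing l with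
  | _ n ih =>
    by_cases hnd : (G.walkVerts u l).Nodup
    · exact ⟨l, List.Sublist.refl _, hw, hnd⟩
    · obtain ⟨m, hm, hlen, hmw⟩ := hw.exists_shorter hnd
      obtain ⟨m', hm', hw', hnd'⟩ := ih _ (h ▸ hlen) hmw rfl
      exact ⟨m', hm'.trans hm, hw', hnd'⟩

variable [Fintype E] [DecidableEq E]

lemma degOn_insert {S : Finset E} {f : E} (hf : f ∉ S) (x : V) :
    G.degOn (insert f S) x
      = G.degOn S x + ((if G.src f = x then 1 else 0) + (if G.tgt f = x then 1 else 0)) := by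
  rw [degOn, sum_insert hf, degOn, add_comm]

lemma IsWalk.degOn_toFinset :
    ∀ {l : List E} {u v : V}, G.IsWalk u l v → (G.walkVerts u l).Nodup → ∀ x : V,
      G.degOn l.toFinset x + ((if u = x then 1 else 0) + (if v = x then 1 else 0))
        = if x ∈ G.walkVerts u l then 2 else 0
  | [], u, _, rfl, _, x => by
    by_cases h : u = x <;> simp [degOn, walkVerts, h, eq_comm]
  | f :: l, u, v, hw, hnd, x => by
    rw [walkVerts, List.nodup_cons] at hnd
    have ih := hw.2.degOn_toFinset hnd.2
    have hf : f ∉ l := fun hf => by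
      have h := hw.2.endpoints_mem_walkVerts f hf
      rcases hw.1 with rfl | rfl
      exacts [hnd.1 h.1, hnd.1 h.2]
    have hends : ((if G.src f = x then 1 else 0) + (if G.tgt f = x then 1 else 0))
        = (if u = x then 1 else 0) + (if G.nextV f u = x then 1 else 0) := by
      rcases joins_nextV hw.1 with ⟨h₁, h₂⟩ | ⟨h₁, h₂⟩ <;> rw [h₁, h₂]
      ring
    rw [List.toFinset_cons, degOn_insert (by simpa using hf), hends]
    simp only [walkVerts, List.mem_cons]
    by_cases hx : u = x
    · subst hx
      have h := ih u
      rw [if_neg hnd.1] at h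
      simp only [Nat.add_eq_zero_iff, ite_eq_right_iff, one_ne_zero, imp_false] at h
      simp [h.1, h.2.1, h.2.2]
    · simp only [hx, if_false, false_or, Ne.symm hx, ← ih x]
      ring

/-- Close a path in `S` from `src e` to `tgt e` with the edge `e`. -/
lemma exists_isSimpleCycle_of_eqvGen {S : Finset E} {e : E} (heS : e ∉ S)
    (h : EqvGen (G.Adj ↑S) (G.src e) (G.tgt e)) :
    ∃ C : Finset E, G.IsSimpleCycle C ∧ e ∈ C ∧ C ⊆ insert e S := by
  obtain ⟨l₀, hl₀S, hw₀⟩ := exists_isWalk_of_eqvGen h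
  obtain ⟨l, hsub, hw, hnd⟩ := hw₀.exists_nodup
  have hlS : ∀ f ∈ l, f ∈ S := fun f hf => hl₀S f (hsub.subset hf)
  have hel : e ∉ l.toFinset := fun hf => heS (hlS e (List.mem_toFinset.mp hf))
  have hconn : ∀ x ∈ G.walkVerts (G.src e) l,
      EqvGen (G.Adj ↑(insert e l.toFinset)) (G.src e) x := by
    intro x hx
    obtain ⟨l₁, l₂, rfl, hw₁, -⟩ := hw.split hx
    exact hw₁.eqvGen fun g hg => by simp [hg]
  have hsrc : ∀ g ∈ insert e l.toFinset, G.src g ∈ G.walkVerts (G.src e) l := by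
    intro g hg
    rcases mem_insert.mp hg with rfl | hg
    · exact mem_walkVerts_self _ l
    · exact (hw.endpoints_mem_walkVerts g (List.mem_toFinset.mp hg)).1
  refine ⟨insert e l.toFinset, ⟨⟨e, mem_insert_self e _⟩, fun x => ?_, ?_⟩,
    mem_insert_self e _, ?_⟩
  · have hdeg := hw.degOn_toFinset hnd x
    rw [degOn_insert hel]
    split_ifs at hdeg ⊢ <;> omega
  · exact fun f hf f' hf' => (hconn _ (hsrc f hf)).symm.trans _ _ _ (hconn _ (hsrc f' hf'))
  · exact insert_subset_insert e fun f hf => hlS f (List.mem_toFinset.mp hf)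

end Walks

section SpanningTrees

variable [Fintype V] [Fintype E] [DecidableEq V] [DecidableEq E] {G : DirGraph V E}
  {T : Finset E}

/-- Otherwise an edge `f ∈ C₁ ∖ C₂` of `T` could be dropped from `T` without disconnecting it:
`C₂` connects the ends of `e` and then `C₁` those of `f`. -/
lemma IsSpanningTree.subset_of_isSimpleCycle (hT : G.IsSpanningTree T) {e : E}
    {C₁ C₂ : Finset E} (h₁ : G.IsSimpleCycle C₁) (h₂ : G.IsSimpleCycle C₂) (he : e ∈ C₂)
    (hC₁ : C₁ ⊆ insert e T) (hC₂ : C₂ ⊆ insert e T) : C₁ ⊆ C₂ := by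
  intro f hf
  by_contra hfC₂
  have hfT : f ∈ T := (mem_insert.mp (hC₁ hf)).resolve_left (by rintro rfl; exact hfC₂ he)
  have he' : EqvGen (G.Adj ↑(T.erase f)) (G.src e) (G.tgt e) := by
    refine eqvGen_mono (fun x hx => ?_) (eqvGen_erase_of_even_degOn h₂.even_degOn he)
    obtain ⟨hxe, hxC₂⟩ := mem_erase.mp hx
    refine mem_erase.mpr ⟨by rintro rfl; exact hfC₂ hxC₂, ?_⟩
    exact (mem_insert.mp (hC₂ hxC₂)).resolve_left hxe
  have hf' : EqvGen (G.Adj ↑(T.erase f)) (G.src f) (G.tgt f) := by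
    refine eqvGen_of_eqvGen_insert he' (eqvGen_mono (fun x hx => ?_)
      (eqvGen_erase_of_even_degOn h₁.even_degOn hf))
    obtain ⟨hxf, hxC₁⟩ := mem_erase.mp hx
    rcases mem_insert.mp (hC₁ hxC₁) with rfl | hxT
    · exact Set.mem_insert _ _
    · exact Set.mem_insert_of_mem _ (mem_erase.mpr ⟨hxf, hxT⟩)
  have hconn : ∀ u v, EqvGen (G.Adj ↑(T.erase f)) u v := fun u v =>
    eqvGen_of_eqvGen_insert hf' (by rw [← coe_insert, insert_erase hfT]; exact hT.1 u v)
  have hcard := card_le_card_add_one_of_connected hconn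
  rw [card_erase_of_mem hfT] at hcard
  have htree := hT.2
  have hpos : 0 < T.card := card_pos.mpr ⟨f, hfT⟩
  omega

lemma IsSpanningTree.eq_of_isSimpleCycle (hT : G.IsSpanningTree T) {e : E}
    {C₁ C₂ : Finset E} (h₁ : G.IsSimpleCycle C₁) (h₂ : G.IsSimpleCycle C₂) (he₁ : e ∈ C₁)
    (he₂ : e ∈ C₂) (hC₁ : C₁ ⊆ insert e T) (hC₂ : C₂ ⊆ insert e T) : C₁ = C₂ :=
  (hT.subset_of_isSimpleCycle h₁ h₂ he₂ hC₁ hC₂).antisymm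
    (hT.subset_of_isSimpleCycle h₂ h₁ he₁ hC₂ hC₁)

/-- Spanning trees of the contraction `G / C` are the edge sets `F` for which `F ∪ (C ∖ e)` is
a spanning tree of `G`. -/
lemma isSpanningTree_union_erase_iff {C F : Finset E} (hC : G.IsSimpleCycle C) {e : E}
    (he : e ∈ C) (hF : Disjoint F C) :
    ((∀ u v, EqvGen (G.Adj ↑(F ∪ C)) u v) ∧ F.card + 1 = G.numComponents ↑C)
      ↔ G.IsSpanningTree (F ∪ C.erase e) := by
  have hends : EqvGen (G.Adj ↑(F ∪ C.erase e)) (G.src e) (G.tgt e) :=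
    eqvGen_mono (coe_subset.mpr subset_union_right) (eqvGen_erase_of_even_degOn hC.even_degOn he)
  have hinsert : (↑(F ∪ C) : Set E) = insert e ↑(F ∪ C.erase e) := by
    rw [← coe_insert, ← union_insert, insert_erase he]
  have hcard : (F ∪ C.erase e).card + 1 = F.card + C.card := by
    rw [card_union_of_disjoint (hF.mono_right (erase_subset e C)), card_erase_of_mem he]
    have := card_pos.mpr ⟨e, he⟩
    omega
  have hcomp := hC.numComponents_add_card
  refine and_congr (forall₂_congr fun u v => ?_) (by omega)
  rw [hinsert]
  exact ⟨eqvGen_of_eqvGen_insert hends, eqvGen_mono (Set.subset_insert _ _)⟩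

end SpanningTrees

section Kirchhoff

variable [Fintype V] [Fintype E] [DecidableEq E] {R : Type*} [CommRing R]

open Classical in
noncomputable def kirchhoffAvoiding (G : DirGraph V E) (e : E) (α : E → R) : R :=
  ∑ T : Finset E, if e ∉ T ∧ G.IsSpanningTree T then ∏ f ∈ Tᶜ.erase e, α f else 0

variable {G : DirGraph V E} {e : E}

lemma kirchhoffOn_compl_singleton (h : ¬ G.IsBridge e) (α : E → R) :
    G.kirchhoffOn {e}ᶜ α = G.kirchhoffAvoiding e α := by
  classical
  have : Nonempty V := ⟨G.src e⟩
  have hconn : ∀ u v, EqvGen (G.Adj ↑({e}ᶜ : Finset E)) u v := by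
    simpa [IsBridge, Set.compl_def] using h
  refine sum_congr rfl fun T _ => if_congr ?_ (by congr 1; ext; simp) rfl
  rw [numComponents_eq_one hconn, subset_compl_singleton, IsSpanningTree]
  simp only [hconn, iff_true]

open MvPolynomial in
lemma pderiv_kirchhoff :
    pderiv e (G.kirchhoff fun f => (X f : MvPolynomial E R))
      = G.kirchhoffAvoiding e fun f => (X f : MvPolynomial E R) := by
  classical
  rw [kirchhoff, kirchhoffAvoiding, map_sum]
  refine sum_congr rfl fun T _ => ?_
  rw [apply_ite (pderiv e), map_zero, pderiv_prod_X]
  by_cases hT : G.IsSpanningTree T <;> by_cases he : e ∈ T <;> simp [hT, he]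

variable [DecidableEq V]

/-- `C ∋ e` is a simple cycle and `F` a spanning tree of `G / C`, in the form given by
`isSpanningTree_union_erase_iff`. -/
def IsCycleTreePair (G : DirGraph V E) (e : E) (C F : Finset E) : Prop :=
  (G.IsSimpleCycle C ∧ e ∈ C) ∧ Disjoint F C ∧ G.IsSpanningTree (F ∪ C.erase e)

open Classical in
lemma sum_kirchhoffContract_eq_sum_isCycleTreePair (α : E → R) :
    (∑ C : Finset E, if G.IsSimpleCycle C ∧ e ∈ C then G.kirchhoffContract C α else 0)
      = ∑ p : Finset E × Finset E with G.IsCycleTreePair e p.1 p.2, ∏ f ∈ p.1ᶜ \ p.2, α f := by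
  rw [sum_filter, ← univ_product_univ, sum_product]
  refine sum_congr rfl fun C _ => ?_
  by_cases hC : G.IsSimpleCycle C ∧ e ∈ C
  · rw [if_pos hC, kirchhoffContract]
    refine sum_congr rfl fun F _ => if_congr ?_ rfl rfl
    rw [subset_compl_iff_disjoint_right]
    exact ⟨fun ⟨hF, hT⟩ => ⟨hC, hF, (isSpanningTree_union_erase_iff hC.1 hC.2 hF).mp hT⟩,
      fun ⟨_, hF, hT⟩ => ⟨hF, (isSpanningTree_union_erase_iff hC.1 hC.2 hF).mpr hT⟩⟩
  · simp [IsCycleTreePair, hC]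

lemma IsCycleTreePair.notMem_union_erase {C F : Finset E} (h : G.IsCycleTreePair e C F) :
    e ∉ F ∪ C.erase e := by
  have heF : e ∉ F := fun he => disjoint_left.mp h.2.1 he h.1.2
  simp [heF]

lemma IsCycleTreePair.eq_of_union_erase_eq {C₁ F₁ C₂ F₂ : Finset E}
    (h₁ : G.IsCycleTreePair e C₁ F₁) (h₂ : G.IsCycleTreePair e C₂ F₂)
    (h : F₁ ∪ C₁.erase e = F₂ ∪ C₂.erase e) : C₁ = C₂ ∧ F₁ = F₂ := by
  have hsub (C F : Finset E) : C ⊆ insert e (F ∪ C.erase e) :=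
    (insert_erase_subset e C).trans (insert_subset_insert e subset_union_right)
  have hsdiff {C F : Finset E} (hF : Disjoint F C) : (F ∪ C.erase e) \ C = F := by
    rw [union_sdiff_distrib, sdiff_eq_self_of_disjoint hF,
      sdiff_eq_empty_iff_subset.mpr (erase_subset e C), union_empty]
  obtain rfl : C₁ = C₂ := h₁.2.2.eq_of_isSimpleCycle h₁.1.1 h₂.1.1 h₁.1.2 h₂.1.2
    (hsub C₁ F₁) (h ▸ hsub C₂ F₂)
  exact ⟨rfl, by rw [← hsdiff h₁.2.1, ← hsdiff h₂.2.1, h]⟩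

lemma IsSpanningTree.exists_isCycleTreePair {T : Finset E} (hT : G.IsSpanningTree T)
    (heT : e ∉ T) : ∃ C, G.IsCycleTreePair e C (T \ C.erase e) ∧ T \ C.erase e ∪ C.erase e = T := by
  obtain ⟨C, hC, heC, hCT⟩ := exists_isSimpleCycle_of_eqvGen heT (hT.1 _ _)
  have hunion : T \ C.erase e ∪ C.erase e = T := sdiff_union_of_subset fun x hx =>
    (mem_insert.mp (hCT (mem_of_mem_erase hx))).resolve_left (ne_of_mem_erase hx)
  have hF : Disjoint (T \ C.erase e) C := by
    refine disjoint_left.mpr fun x hx hxC => (mem_sdiff.mp hx).2 (mem_erase.mpr ⟨?_, hxC⟩)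
    rintro rfl
    exact heT (mem_sdiff.mp hx).1
  exact ⟨C, ⟨⟨hC, heC⟩, hF, by rw [hunion]; exact hT⟩, hunion⟩

open Classical in
lemma sum_isCycleTreePair_eq_kirchhoffAvoiding (α : E → R) :
    ∑ p : Finset E × Finset E with G.IsCycleTreePair e p.1 p.2, ∏ f ∈ p.1ᶜ \ p.2, α f
      = G.kirchhoffAvoiding e α := by
  rw [kirchhoffAvoiding, ← sum_filter]
  refine sum_bij (fun p _ => p.2 ∪ p.1.erase e) (fun p hp => ?_) (fun p hp q hq h => ?_)
    (fun T hT => ?_) (fun p hp => ?_)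
  · have h := (mem_filter.mp hp).2
    exact mem_filter.mpr ⟨mem_univ _, h.notMem_union_erase, h.2.2⟩
  · obtain ⟨hC, hF⟩ := (mem_filter.mp hp).2.eq_of_union_erase_eq (mem_filter.mp hq).2 h
    exact Prod.ext hC hF
  · obtain ⟨heT, hT⟩ := (mem_filter.mp hT).2
    obtain ⟨C, hCF, hunion⟩ := hT.exists_isCycleTreePair heT
    exact ⟨(C, T \ C.erase e), mem_filter.mpr ⟨mem_univ _, hCF⟩, hunion⟩
  · obtain ⟨⟨-, heC⟩, hF, -⟩ := (mem_filter.mp hp).2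
    refine prod_congr ?_ fun _ _ => rfl
    ext x
    have hxF : x ∈ p.2 → x ∉ p.1 := fun h => disjoint_left.mp hF h
    simp only [mem_sdiff, mem_compl, mem_erase, mem_union, ne_eq, not_or, not_and_or, not_not]
    grind

end Kirchhoff

end DirGraph

open Classical MvPolynomial in
theorem cycle_polynomial_diagonal_general
    {V E : Type*} [Fintype V] [Fintype E] [DecidableEq V] [DecidableEq E]
    (G : DirGraph V E) (e : E)
    (hbridge : ¬ G.IsBridge e) :
    (∑ C : Finset E,
        if G.IsSimpleCycle C ∧ e ∈ C then
          G.kirchhoffContract C (fun f => (X f : MvPolynomial E ℤ))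
        else 0)
        = G.kirchhoffOn {e}ᶜ (fun f => (X f : MvPolynomial E ℤ))
      ∧ G.kirchhoffOn {e}ᶜ (fun f => (X f : MvPolynomial E ℤ))
        = pderiv e (G.kirchhoff fun f => (X f : MvPolynomial E ℤ)) := by
  rw [DirGraph.kirchhoffOn_compl_singleton hbridge, DirGraph.pderiv_kirchhoff,
    DirGraph.sum_kirchhoffContract_eq_sum_isCycleTreePair,
    DirGraph.sum_isCycleTreePair_eq_kirchhoffAvoiding]
  exact ⟨rfl, rfl⟩

open Classical MvPolynomial in
/-- For a connected graph `G` and an edge `e` that is not a bridge, the diagonal cycle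
polynomial satisfies `χ_G^{e,e} = ∑_{C simple cycle, e ∈ C} Ψ_{G/C} = Ψ_{G∖e}
= ∂Ψ_G/∂α_e` (as polynomials in the variables `α_f = X_f`). -/
theorem cycle_polynomial_diagonal
    {V E : Type*} [Fintype V] [Fintype E] [DecidableEq V] [DecidableEq E]
    (G : DirGraph V E) (e : E)
    (hconn : ∀ u v : V, Relation.EqvGen (G.Adj Set.univ) u v)
    (hbridge : ¬ G.IsBridge e) :
    (∑ C : Finset E,
        if G.IsSimpleCycle C ∧ e ∈ C then
          G.kirchhoffContract C (fun f => (X f : MvPolynomial E ℤ))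
        else 0)
        = G.kirchhoffOn {e}ᶜ (fun f => (X f : MvPolynomial E ℤ))
      ∧ G.kirchhoffOn {e}ᶜ (fun f => (X f : MvPolynomial E ℤ))
        = pderiv e (G.kirchhoff fun f => (X f : MvPolynomial E ℤ)) :=
  cycle_polynomial_diagonal_general G e hbridge
end
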